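/- For every real x ≥ 5, one has π/6 < θ_x + π/x < π/2, where θ_x = π/2 − arccos(1/(2 cos(π/x))). -/

import Mathlib

/-!
Put `t = π/x ∈ (0, π/5]` and `c = cos t`, so that `θ_x + t = π/2 + t - arccos (1/(2c))`.
Since `1 < 2c² = 1 + cos 2t` we have `1/(2c) < c`, hence `arccos (1/(2c)) > arccos c = t`,
which is the upper bound. Since `c < 1` we have `1/(2c) > 1/2`, hence
`arccos (1/(2c)) < arccos (1/2) = π/3`, which gives the lower bound even without the `+ t`.
-/

/-- `θ_x = π/2 - arccos (1 / (2 cos (π/x)))`. -/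
noncomputable def theta (x : ℝ) : ℝ :=
  Real.pi / 2 - Real.arccos (1 / (2 * Real.cos (Real.pi / x)))

namespace Real

lemma arccos_lt_pi_div_three {y : ℝ} (hy : 1 / 2 < y) : arccos y < π / 3 := by
  have hπ := pi_pos
  have h_half : arccos (1 / 2) = π / 3 :=
    arccos_eq_of_eq_cos (by linarith) (by linarith) cos_pi_div_three.symm
  rcases le_or_gt y 1 with hy1 | hy1
  · exact h_half ▸ arccos_lt_arccos (by norm_num) hy hy1
  · rw [arccos_of_one_le hy1.le]
    positivity

lemma lt_arccos_one_div_two_mul_cos {t : ℝ} (h0 : 0 ≤ t) (h : t < π / 4) :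
    t < arccos (1 / (2 * cos t)) := by
  have hπ := pi_pos
  have hc : 0 < cos t := cos_pos_of_mem_Ioo ⟨by linarith, by linarith⟩
  have h2t : 0 < cos (2 * t) := cos_pos_of_mem_Ioo ⟨by linarith, by linarith⟩
  have hlt : 1 / (2 * cos t) < cos t := by
    rw [div_lt_iff₀ (by positivity)]
    nlinarith [cos_two_mul t]
  calc t = arccos (cos t) := (arccos_cos h0 (by linarith)).symm
    _ < arccos (1 / (2 * cos t)) :=
      arccos_lt_arccos (by rw [le_div_iff₀ (by positivity)]; linarith) hlt (cos_le_one t)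

lemma arccos_one_div_two_mul_cos_lt_pi_div_three {t : ℝ} (h0 : 0 < t) (h : t < π / 2) :
    arccos (1 / (2 * cos t)) < π / 3 := by
  have hπ := pi_pos
  have hc : 0 < cos t := cos_pos_of_mem_Ioo ⟨by linarith, h⟩
  have hc1 : cos t < 1 := by
    simpa using cos_lt_cos_of_nonneg_of_le_pi le_rfl (by linarith) h0
  refine arccos_lt_pi_div_three ?_
  rw [div_lt_div_iff₀ (by norm_num) (by positivity)]
  linarith

end Real

/-- For every real `x ≥ 5`, `π/6 < θ_x + π/x < π/2`. -/
theorem theta_add_bounds (x : ℝ) (hx : 5 ≤ x) :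
    Real.pi / 6 < theta x + Real.pi / x ∧ theta x + Real.pi / x < Real.pi / 2 := by
  have hπ := Real.pi_pos
  have ht0 : 0 < Real.pi / x := by positivity
  have ht5 : Real.pi / x ≤ Real.pi / 5 := div_le_div_of_nonneg_left hπ.le (by norm_num) hx
  have hupper := Real.lt_arccos_one_div_two_mul_cos ht0.le (by linarith)
  have hlower := Real.arccos_one_div_two_mul_cos_lt_pi_div_three ht0 (by linarith)
  unfold theta
  constructor <;> linarith
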